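/- For R, R_c ∈ SO(3) with Ψ(R,R_c) = (1/2)tr(I − R_cᵀR) < 1, and e_R = (1/2)(R_cᵀR − RᵀR_c)^∨, the vector X₀ = (e₃ᵀ R_cᵀ R e₃)(R e₃) − R_c e₃ satisfies ‖X₀‖ ≤ ‖e_R‖. -/

import Mathlib

open Matrix

noncomputable section

/-- The hat map `ℝ³ → 𝔰𝔬(3)`, with `hat x *ᵥ y = x × y`. -/
def hat (x : Fin 3 → ℝ) : Matrix (Fin 3) (Fin 3) ℝ :=
  !![0, -x 2, x 1; x 2, 0, -x 0; -x 1, x 0, 0]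

/-- The vee map, inverse of the hat map on skew-symmetric matrices. -/
def vee (A : Matrix (Fin 3) (Fin 3) ℝ) : Fin 3 → ℝ :=
  ![A 2 1, A 0 2, A 1 0]

/-- Membership in the special orthogonal group SO(3). -/
def SO3 (R : Matrix (Fin 3) (Fin 3) ℝ) : Prop :=
  Rᵀ * R = 1 ∧ R.det = 1

/-- Euclidean norm on `ℝ³` (and `ℝ²`). -/
def norm3 (x : Fin 3 → ℝ) : ℝ := Real.sqrt (x ⬝ᵥ x)

def norm2v (x : Fin 2 → ℝ) : ℝ := Real.sqrt (x ⬝ᵥ x)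

/-- Attitude error function `Ψ(R,R_d) = (1/2) tr (G (I - R_dᵀ R))`. -/
def Psi (G R Rd : Matrix (Fin 3) (Fin 3) ℝ) : ℝ :=
  (1 / 2) * (G * (1 - Rdᵀ * R)).trace

/-- Attitude error vector `e_R = (1/2) (G R_dᵀ R - Rᵀ R_d G)^∨`. -/
def eR (G R Rd : Matrix (Fin 3) (Fin 3) ℝ) : Fin 3 → ℝ :=
  (1 / 2 : ℝ) • vee (G * Rdᵀ * R - Rᵀ * Rd * G)

/-- Third standard basis vector of `ℝ³`. -/
def e3 : Fin 3 → ℝ := ![0, 0, 1]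

/-!
Put `Q = R_cᵀ R ∈ SO(3)` with rotation angle `θ`, so `tr Q = 1 + 2 cos θ`. Then
`‖e_R‖² = ‖(Q - Qᵀ)^∨‖² / 4 = (3 - tr Q)(1 + tr Q) / 4 = sin² θ`, while
`X₀ = (b₃_c · b₃) b₃ - b₃_c` with `b₃_c · b₃ = Q₂₂` gives `‖X₀‖² = 1 - Q₂₂²`.
The hypothesis `Ψ < 1` says `cos θ > 0`, and `Q₂₂ ≥ cos θ` because
`(Q₀₂ + Q₂₀)² + (Q₁₂ + Q₂₁)² = 2 (1 + Q₂₂ - Q₀₀ - Q₁₁)(1 - Q₂₂)`; hence `Q₂₂² ≥ cos² θ`.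
-/

theorem Matrix.mulVec_dotProduct_mulVec_of_transpose_mul_self {n : Type*} [Fintype n]
    [DecidableEq n] {A : Matrix n n ℝ} (hA : Aᵀ * A = 1) (x y : n → ℝ) :
    A *ᵥ x ⬝ᵥ A *ᵥ y = x ⬝ᵥ y := by
  rw [dotProduct_mulVec, ← mulVec_transpose, mulVec_mulVec, hA, one_mulVec]

theorem dotProduct_smul_sub_self_of_unit {n : Type*} [Fintype n] {u v : n → ℝ}
    (hu : u ⬝ᵥ u = 1) :
    ((v ⬝ᵥ u) • u - v) ⬝ᵥ ((v ⬝ᵥ u) • u - v) = v ⬝ᵥ v - (v ⬝ᵥ u) ^ 2 := by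
  simp only [sub_dotProduct, dotProduct_sub, smul_dotProduct, dotProduct_smul, hu,
    dotProduct_comm u v, smul_eq_mul]
  ring

namespace SO3

variable {Q R Rc : Matrix (Fin 3) (Fin 3) ℝ}

theorem mul_transpose (hQ : SO3 Q) : Q * Qᵀ = 1 := mul_eq_one_comm.mp hQ.1

theorem transpose_mul (hR : SO3 R) (hRc : SO3 Rc) : SO3 (Rcᵀ * R) := by
  refine ⟨?_, by rw [det_mul, det_transpose, hR.2, hRc.2, mul_one]⟩
  rw [Matrix.transpose_mul, transpose_transpose, Matrix.mul_assoc, ← Matrix.mul_assoc Rc,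
    hRc.mul_transpose, Matrix.one_mul, hR.1]

theorem adjugate_eq_transpose (hQ : SO3 Q) : Q.adjugate = Qᵀ := by
  calc Q.adjugate = Q.adjugate * (Q * Qᵀ) := by rw [hQ.mul_transpose, Matrix.mul_one]
    _ = Qᵀ := by rw [← Matrix.mul_assoc, adjugate_mul, hQ.2, one_smul, Matrix.one_mul]

theorem sum_sq_row (hQ : SO3 Q) (j : Fin 3) : Q j 0 ^ 2 + Q j 1 ^ 2 + Q j 2 ^ 2 = 1 := by
  have := congrFun (congrFun hQ.mul_transpose j) j
  simp only [mul_apply, transpose_apply, Fin.sum_univ_three, one_apply_eq] at this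
  linear_combination this

theorem sum_sq_col (hQ : SO3 Q) (k : Fin 3) : Q 0 k ^ 2 + Q 1 k ^ 2 + Q 2 k ^ 2 = 1 := by
  have := congrFun (congrFun hQ.1 k) k
  simp only [mul_apply, transpose_apply, Fin.sum_univ_three, one_apply_eq] at this
  linear_combination this

theorem diag_eq_minor (hQ : SO3 Q) :
    Q 1 1 * Q 2 2 - Q 1 2 * Q 2 1 = Q 0 0 ∧ Q 0 0 * Q 2 2 - Q 0 2 * Q 2 0 = Q 1 1 ∧
      Q 0 0 * Q 1 1 - Q 0 1 * Q 1 0 = Q 2 2 := by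
  have h := hQ.adjugate_eq_transpose
  rw [adjugate_fin_three] at h
  refine ⟨?_, ?_, ?_⟩
  · simpa using congrFun (congrFun h 0) 0
  · simpa using congrFun (congrFun h 1) 1
  · simpa using congrFun (congrFun h 2) 2

theorem vee_sub_transpose_dotProduct_self (hQ : SO3 Q) :
    vee (Q - Qᵀ) ⬝ᵥ vee (Q - Qᵀ) = (3 - Q.trace) * (1 + Q.trace) := by
  obtain ⟨h0, h1, h2⟩ := hQ.diag_eq_minor
  simp only [vee, dotProduct, Fin.sum_univ_three, Matrix.sub_apply, transpose_apply,
    trace_fin_three, cons_val_zero, cons_val_one, cons_val_two, head_cons, tail_cons]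
  linear_combination hQ.sum_sq_row 0 + hQ.sum_sq_row 1 + hQ.sum_sq_row 2 +
    2 * h0 + 2 * h1 + 2 * h2

theorem sq_add_sq_offdiag (hQ : SO3 Q) :
    (Q 0 2 + Q 2 0) ^ 2 + (Q 1 2 + Q 2 1) ^ 2 =
      2 * (1 + Q 2 2 - Q 0 0 - Q 1 1) * (1 - Q 2 2) := by
  obtain ⟨h0, h1, -⟩ := hQ.diag_eq_minor
  linear_combination hQ.sum_sq_col 2 + hQ.sum_sq_row 2 - 2 * h0 - 2 * h1

theorem trace_sub_one_le_two_mul (hQ : SO3 Q) : Q.trace - 1 ≤ 2 * Q 2 2 := by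
  have hsq := hQ.sq_add_sq_offdiag
  have h00 : Q 0 0 ≤ 1 := by nlinarith [hQ.sum_sq_row 0, sq_nonneg (Q 0 1), sq_nonneg (Q 0 2)]
  have h11 : Q 1 1 ≤ 1 := by nlinarith [hQ.sum_sq_row 1, sq_nonneg (Q 1 0), sq_nonneg (Q 1 2)]
  have h22 : Q 2 2 ≤ 1 := by nlinarith [hQ.sum_sq_row 2, sq_nonneg (Q 2 0), sq_nonneg (Q 2 1)]
  rw [trace_fin_three]
  rcases h22.lt_or_eq with h22 | h22
  · have : 0 ≤ 2 * (1 + Q 2 2 - Q 0 0 - Q 1 1) * (1 - Q 2 2) := by rw [← hsq]; positivity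
    nlinarith
  · linarith

end SO3

theorem eR_one (R Rc : Matrix (Fin 3) (Fin 3) ℝ) :
    eR 1 R Rc = (1 / 2 : ℝ) • vee (Rcᵀ * R - (Rcᵀ * R)ᵀ) := by
  rw [eR, Matrix.one_mul, Matrix.mul_one, Matrix.transpose_mul, transpose_transpose]

theorem Psi_one (R Rc : Matrix (Fin 3) (Fin 3) ℝ) : Psi 1 R Rc = (3 - (Rcᵀ * R).trace) / 2 := by
  rw [Psi, Matrix.one_mul, trace_sub, trace_one, Fintype.card_fin]
  ring

theorem e3_dotProduct_mulVec_e3 (Q : Matrix (Fin 3) (Fin 3) ℝ) : e3 ⬝ᵥ Q *ᵥ e3 = Q 2 2 := by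
  simp [e3, dotProduct, mulVec, Fin.sum_univ_three]

/-- `‖(e₃ᵀR_cᵀRe₃)(Re₃) − R_ce₃‖ ≤ ‖e_R‖` whenever `Ψ(R,R_c) < 1`. -/
theorem X0_bound (R Rc : Matrix (Fin 3) (Fin 3) ℝ)
    (hR : SO3 R) (hRc : SO3 Rc) (hΨ : Psi 1 R Rc < 1) :
    norm3 ((e3 ⬝ᵥ ((Rcᵀ * R) *ᵥ e3)) • (R *ᵥ e3) - Rc *ᵥ e3) ≤ norm3 (eR 1 R Rc) := by
  set Q := Rcᵀ * R with hQdef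
  have hQ : SO3 Q := hR.transpose_mul hRc
  have he3 : e3 ⬝ᵥ e3 = 1 := by simp [e3, dotProduct, Fin.sum_univ_three]
  have hcos : e3 ⬝ᵥ Q *ᵥ e3 = Rc *ᵥ e3 ⬝ᵥ R *ᵥ e3 := by
    rw [hQdef, ← mulVec_mulVec, dotProduct_mulVec, vecMul_transpose]
  have hX : ((e3 ⬝ᵥ Q *ᵥ e3) • (R *ᵥ e3) - Rc *ᵥ e3) ⬝ᵥ
      ((e3 ⬝ᵥ Q *ᵥ e3) • (R *ᵥ e3) - Rc *ᵥ e3) = 1 - Q 2 2 ^ 2 := by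
    have hb3 : R *ᵥ e3 ⬝ᵥ R *ᵥ e3 = 1 := by
      rw [mulVec_dotProduct_mulVec_of_transpose_mul_self hR.1, he3]
    rw [hcos, dotProduct_smul_sub_self_of_unit hb3, ← hcos, e3_dotProduct_mulVec_e3,
      mulVec_dotProduct_mulVec_of_transpose_mul_self hRc.1, he3]
  have hE : eR 1 R Rc ⬝ᵥ eR 1 R Rc = (3 - Q.trace) * (1 + Q.trace) / 4 := by
    rw [eR_one, smul_dotProduct, dotProduct_smul, hQ.vee_sub_transpose_dotProduct_self,
      smul_eq_mul, smul_eq_mul]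
    ring
  have htr : 1 < Q.trace := by rw [Psi_one] at hΨ; linarith
  have hdiag := hQ.trace_sub_one_le_two_mul
  rw [norm3, norm3, hX, hE]
  gcongr
  nlinarith
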